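/- arXiv:2005.13217 — 3 statements merged into one kernel-verified Lean document; each statement's English description precedes it below -/
import Mathlib

section
/- There exists a constant C > 0 such that for all sufficiently large n, τ(n) ≤ n^{C / log log n}. -/
/-!
Writing `n = ∏ p ^ aₚ` and fixing `ε > 0`, compare `τ(n) = ∏ (aₚ + 1)` with `n ^ ε = ∏ (p ^ ε) ^ aₚ`
factor by factor. If `p ^ ε ≥ 2` then `a + 1 ≤ 2 ^ a ≤ (p ^ ε) ^ a`; the remaining primes satisfy
`p < 2 ^ (1/ε)` and each costs at most the factor `(ε log 2)⁻¹`. Hence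
`τ(n) ≤ (ε log 2)⁻¹ ^ ⌈2 ^ (1/ε)⌉ · n ^ ε`. With `ε = 1 / log log n` the first factor is
`(log log n / log 2) ^ ⌈(log n) ^ log 2⌉ = exp (o(log n / log log n))` because `log 2 < 1`, so it is
at most `n ^ ε` for large `n`, and `τ(n) ≤ n ^ (2 / log log n)`.
-/

open Real Filter Finset

lemma natCast_add_one_le_pow_of_two_le {y : ℝ} (hy : 2 ≤ y) (a : ℕ) : (a + 1 : ℝ) ≤ y ^ a :=
  calc (a + 1 : ℝ) ≤ 2 ^ a := by exact_mod_cast Nat.lt_two_pow_self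
    _ ≤ y ^ a := pow_le_pow_left₀ zero_le_two hy a

lemma natCast_add_one_le_inv_mul_pow {y c : ℝ} (hy : 0 < y) (hc : 0 < c) (hc1 : c ≤ 1)
    (hcy : c ≤ log y) (a : ℕ) : (a + 1 : ℝ) ≤ c⁻¹ * y ^ a := by
  have hexp : a * c + 1 ≤ y ^ a :=
    calc a * c + 1 ≤ a * log y + 1 := by gcongr
      _ ≤ exp (a * log y) := add_one_le_exp _
      _ = y ^ a := by rw [← log_pow, exp_log (pow_pos hy a)]
  calc (a + 1 : ℝ) ≤ a + c⁻¹ := by gcongr; exact (one_le_inv₀ hc).mpr hc1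
    _ = c⁻¹ * (a * c + 1) := by field_simp
    _ ≤ c⁻¹ * y ^ a := by gcongr

lemma card_filter_rpow_lt_two_le (s : Finset ℕ) {ε : ℝ} (hε : 0 < ε) :
    #{p ∈ s | ((p : ℕ) : ℝ) ^ ε < 2} ≤ ⌈(2 : ℝ) ^ ε⁻¹⌉₊ := by
  calc #{p ∈ s | ((p : ℕ) : ℝ) ^ ε < 2} ≤ #(range ⌈(2 : ℝ) ^ ε⁻¹⌉₊) := by
        refine card_le_card fun p hp => mem_range.mpr (Nat.lt_ceil.mpr ?_)
        rw [mem_filter] at hp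
        exact (lt_rpow_inv_iff_of_pos p.cast_nonneg zero_le_two hε).mpr hp.2
    _ = ⌈(2 : ℝ) ^ ε⁻¹⌉₊ := card_range _

lemma prod_primeFactors_rpow_pow_factorization {n : ℕ} (hn : n ≠ 0) (ε : ℝ) :
    ∏ p ∈ n.primeFactors, ((p : ℝ) ^ ε) ^ n.factorization p = (n : ℝ) ^ ε := by
  simp_rw [rpow_pow_comm (Nat.cast_nonneg _)]
  rw [finsetProd_rpow _ _ fun p _ => by positivity]
  congr 1
  exact_mod_cast (Nat.prod_primeFactors_pow_factorization hn).symm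

theorem card_divisors_le_mul_rpow {n : ℕ} (hn : n ≠ 0) {ε : ℝ} (hε : 0 < ε)
    (hε1 : ε * log 2 ≤ 1) :
    (n.divisors.card : ℝ) ≤ (ε * log 2)⁻¹ ^ ⌈(2 : ℝ) ^ ε⁻¹⌉₊ * (n : ℝ) ^ ε := by
  set c := ε * log 2
  have hc : 0 < c := mul_pos hε (log_pos one_lt_two)
  have hfactor : ∀ p ∈ n.primeFactors, (n.factorization p + 1 : ℝ) ≤
      (if (p : ℝ) ^ ε < 2 then c⁻¹ else 1) * ((p : ℝ) ^ ε) ^ n.factorization p := by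
    intro p hp
    have hp2 : (2 : ℝ) ≤ p := by exact_mod_cast (Nat.prime_of_mem_primeFactors hp).two_le
    split_ifs with hp_small
    · refine natCast_add_one_le_inv_mul_pow (by positivity) hc hε1 ?_ _
      rw [log_rpow (by positivity)]
      exact mul_le_mul_of_nonneg_left (log_le_log two_pos hp2) hε.le
    · rw [one_mul]; exact natCast_add_one_le_pow_of_two_le (not_lt.mp hp_small) _
  have hsmall : ∏ p ∈ n.primeFactors, (if (p : ℝ) ^ ε < 2 then c⁻¹ else 1) ≤
      c⁻¹ ^ ⌈(2 : ℝ) ^ ε⁻¹⌉₊ := by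
    rw [prod_ite, prod_const, prod_const_one, mul_one]
    exact pow_le_pow_right₀ ((one_le_inv₀ hc).mpr hε1) (card_filter_rpow_lt_two_le _ hε)
  calc (n.divisors.card : ℝ) = ∏ p ∈ n.primeFactors, (n.factorization p + 1 : ℝ) := by
        rw [Nat.card_divisors hn]; push_cast; rfl
    _ ≤ ∏ p ∈ n.primeFactors,
          (if (p : ℝ) ^ ε < 2 then c⁻¹ else 1) * ((p : ℝ) ^ ε) ^ n.factorization p :=
        prod_le_prod (fun _ _ => by positivity) hfactor
    _ ≤ c⁻¹ ^ ⌈(2 : ℝ) ^ ε⁻¹⌉₊ * (n : ℝ) ^ ε := by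
        rw [prod_mul_distrib, prod_primeFactors_rpow_pow_factorization hn]
        exact mul_le_mul_of_nonneg_right hsmall (by positivity)

lemma eventually_div_log_two_pow_ceil_le_exp :
    ∀ᶠ L : ℝ in atTop, (L / log 2) ^ ⌈(2 : ℝ) ^ L⌉₊ ≤ exp (exp L / L) := by
  have hlog2 : 0 < log 2 := log_pos one_lt_two
  have hlog2_lt : log 2 < 1 := log_two_lt_d9.trans (by norm_num)
  filter_upwards [(isLittleO_pow_exp_pos_mul_atTop 2 (sub_pos.mpr hlog2_lt)).bound
    (half_pos hlog2), eventually_ge_atTop 1] with L hsq hL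
  rw [norm_pow, norm_of_nonneg (by positivity), norm_of_nonneg (exp_nonneg _)] at hsq
  have hL0 : 0 < L := one_pos.trans_le hL
  have hceil : (⌈(2 : ℝ) ^ L⌉₊ : ℝ) ≤ 2 * 2 ^ L := by
    have := Nat.ceil_lt_add_one (rpow_nonneg zero_le_two L)
    linarith [one_le_rpow one_le_two hL0.le]
  rw [← log_le_iff_le_exp (by positivity), log_pow, le_div_iff₀ hL0]
  calc ⌈(2 : ℝ) ^ L⌉₊ * log (L / log 2) * L ≤ (2 * 2 ^ L) * (L / log 2) * L := by
        have : 0 ≤ log (L / log 2) := log_nonneg ((one_le_div hlog2).mpr (by linarith))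
        gcongr
        exact log_le_self (by positivity)
    _ = 2 ^ L * (L ^ 2 / (log 2 / 2)) := by field_simp
    _ ≤ exp (log 2 * L) * exp ((1 - log 2) * L) := by
        rw [rpow_def_of_pos two_pos]
        gcongr
        rwa [div_le_iff₀' (half_pos hlog2)]
    _ = exp L := by rw [← exp_add]; ring_nf

lemma eventually_loglog_div_log_two_pow_ceil_le_rpow :
    ∀ᶠ x : ℝ in atTop,
      (log (log x) / log 2) ^ ⌈(2 : ℝ) ^ log (log x)⌉₊ ≤ x ^ (log (log x))⁻¹ := by
  filter_upwards [(tendsto_log_atTop.comp tendsto_log_atTop).eventually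
    eventually_div_log_two_pow_ceil_le_exp, eventually_gt_atTop 1] with x hx hx1
  rw [Function.comp_apply, exp_log (log_pos hx1)] at hx
  rwa [rpow_def_of_pos (zero_lt_one.trans hx1), ← div_eq_mul_inv]

theorem tau_max_order :
    ∃ C : ℝ, 0 < C ∧ ∃ N : ℕ, ∀ n : ℕ, N ≤ n →
      (n.divisors.card : ℝ) ≤ (n : ℝ) ^ (C / Real.log (Real.log n)) := by
  refine ⟨2, two_pos, ?_⟩
  have hloglog := (tendsto_log_atTop.comp tendsto_log_atTop).comp tendsto_natCast_atTop_atTop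
  obtain ⟨N, hN⟩ := eventually_atTop.mp <|
    (tendsto_natCast_atTop_atTop.eventually eventually_loglog_div_log_two_pow_ceil_le_rpow).and <|
      (hloglog.eventually_ge_atTop 1).and (eventually_ge_atTop 1)
  refine ⟨N, fun n hn => ?_⟩
  obtain ⟨hbound, hL, hn1⟩ := hN n hn
  set L := log (log (n : ℝ))
  have hε : L⁻¹ * log 2 ≤ 1 :=
    mul_le_one₀ (inv_le_one_of_one_le₀ hL) (log_nonneg one_le_two)
      (log_two_lt_d9.trans (by norm_num)).le
  have hn0 : (0 : ℝ) < n := by exact_mod_cast hn1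
  calc (n.divisors.card : ℝ) ≤ (L⁻¹ * log 2)⁻¹ ^ ⌈(2 : ℝ) ^ L⁻¹⁻¹⌉₊ * (n : ℝ) ^ L⁻¹ :=
        card_divisors_le_mul_rpow (by omega) (by positivity) hε
    _ = (L / log 2) ^ ⌈(2 : ℝ) ^ L⌉₊ * (n : ℝ) ^ L⁻¹ := by
        rw [inv_inv, mul_inv, inv_inv, div_eq_mul_inv]
    _ ≤ (n : ℝ) ^ L⁻¹ * (n : ℝ) ^ L⁻¹ := mul_le_mul_of_nonneg_right hbound (by positivity)
    _ = (n : ℝ) ^ (2 / L) := by rw [← rpow_add hn0]; ring_nf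
end

section
/- There exists a constant C > 0 such that for all sufficiently large n, σ(n) ≤ C · n · log log n. -/
/-!
Writing `σ(n) = ∏ (p^(a+1) - 1)/(p - 1)` over `p^a ∥ n` gives
`σ(n)/n ≤ ∏_{p ∣ n} p/(p-1) ≤ exp (∑_{p ∣ n} 1/p + O(1))`. Split the prime factors at `y = log n`.
Since their product is at most `n`, at most `log n / log y` of them exceed `y`, contributing
`O(1)` to the sum; the ones below `y` contribute at most `∑_{p ≤ y} 1/p ≤ log log y + O(1)`
(Mertens: Abel summation from `∑_{p ≤ x} log p / p ≤ log x + log 4`, which in turn follows from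
Legendre's formula for `x!` and Chebyshev's `θ(x) ≤ x log 4`).
Hence `σ(n)/n ≤ exp (log log log n + O(1)) = O(log log n)`.
-/

open Finset Real
open scoped Nat

theorem geom_sum_le_pow_div_sub_one {x : ℝ} (hx : 1 < x) (n : ℕ) :
    ∑ i ∈ range n, x ^ i ≤ x ^ n / (x - 1) := by
  rw [geom_sum_eq hx.ne']
  gcongr
  linarith

theorem sum_divisors_le_mul_prod_primeFactors (n : ℕ) :
    ((∑ d ∈ n.divisors, d : ℕ) : ℝ) ≤ n * ∏ p ∈ n.primeFactors, (p / (p - 1) : ℝ) := by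
  rcases eq_or_ne n 0 with rfl | hn
  · simp
  have one_lt : ∀ p ∈ n.primeFactors, (1 : ℝ) < p := fun p hp ↦ by
    exact_mod_cast (Nat.prime_of_mem_primeFactors hp).one_lt
  calc ((∑ d ∈ n.divisors, d : ℕ) : ℝ)
      = ∏ p ∈ n.primeFactors, ∑ k ∈ range (n.factorization p + 1), (p : ℝ) ^ k := by
        rw [Nat.sum_divisors hn]; push_cast; rfl
    _ ≤ ∏ p ∈ n.primeFactors, (p : ℝ) ^ n.factorization p * (p / (p - 1)) := by
        gcongr with p hp
        grw [geom_sum_le_pow_div_sub_one (one_lt p hp), pow_succ, mul_div_assoc]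
    _ = n * ∏ p ∈ n.primeFactors, (p / (p - 1) : ℝ) := by
        rw [prod_mul_distrib]
        congr 1
        conv_rhs => rw [← Nat.prod_factorization_pow_eq_self hn]
        rw [Finsupp.prod, Nat.support_factorization]; push_cast; rfl

theorem prod_primeFactors_div_sub_one_le_exp (n : ℕ) :
    ∏ p ∈ n.primeFactors, (p / (p - 1) : ℝ) ≤ exp (∑ p ∈ n.primeFactors, ((p : ℝ) - 1)⁻¹) := by
  rw [exp_sum]
  refine prod_le_prod (fun p hp ↦ ?_) fun p hp ↦ ?_ <;>
    have hp : (1 : ℝ) < p := by exact_mod_cast (Nat.prime_of_mem_primeFactors hp).one_lt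
  · exact div_nonneg (by linarith) (by linarith)
  · calc (p / (p - 1) : ℝ) = ((p : ℝ) - 1)⁻¹ + 1 := by
          rw [← one_div, div_add_one (by linarith), add_sub_cancel]
      _ ≤ exp ((p : ℝ) - 1)⁻¹ := add_one_le_exp _

theorem sum_primeFactors_inv_sub_one_le (n : ℕ) :
    ∑ p ∈ n.primeFactors, ((p : ℝ) - 1)⁻¹ ≤ ∑ p ∈ n.primeFactors, (p : ℝ)⁻¹ + 2 := by
  have hsub : n.primeFactors ⊆ Ioo 1 (n + 1) := fun p hp ↦
    mem_Ioo.2 ⟨(Nat.prime_of_mem_primeFactors hp).one_lt,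
      Nat.lt_succ_of_le (Nat.le_of_mem_primeFactors hp)⟩
  have hsq : ∑ p ∈ n.primeFactors, ((p : ℝ) ^ 2)⁻¹ ≤ 1 := by
    calc ∑ p ∈ n.primeFactors, ((p : ℝ) ^ 2)⁻¹ ≤ ∑ i ∈ Ioo 1 (n + 1), ((i : ℝ) ^ 2)⁻¹ :=
          sum_le_sum_of_subset_of_nonneg hsub fun _ _ _ ↦ by positivity
      _ ≤ 2 / ((1 : ℕ) + 1) := sum_Ioo_inv_sq_le 1 (n + 1)
      _ = 1 := by norm_num
  -- `1/(p-1) = 1/p + 1/(p(p-1))` and `p(p-1) ≥ p²/2`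
  have hterm : ∀ p ∈ n.primeFactors, ((p : ℝ) - 1)⁻¹ ≤ (p : ℝ)⁻¹ + 2 * ((p : ℝ) ^ 2)⁻¹ := by
    intro p hp
    have : (2 : ℝ) ≤ p := by exact_mod_cast (Nat.prime_of_mem_primeFactors hp).two_le
    rw [inv_le_iff_one_le_mul₀ (by linarith)]
    field_simp
    nlinarith
  calc ∑ p ∈ n.primeFactors, ((p : ℝ) - 1)⁻¹
      ≤ ∑ p ∈ n.primeFactors, ((p : ℝ)⁻¹ + 2 * ((p : ℝ) ^ 2)⁻¹) := sum_le_sum hterm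
    _ ≤ ∑ p ∈ n.primeFactors, (p : ℝ)⁻¹ + 2 := by
        rw [sum_add_distrib, ← mul_sum]; linarith

theorem Nat.div_le_factorization_factorial {p : ℕ} (hp : p.Prime) (n : ℕ) :
    n / p ≤ (n !).factorization p := by
  rw [Nat.factorization_factorial hp (Nat.lt_succ_self _)]
  have hle : n / p ^ 1 ≤ ∑ i ∈ Ico 1 (Nat.log p n + 1), n / p ^ i := by
    rcases lt_or_ge n p with hnp | hpn
    · simp [Nat.div_eq_of_lt hnp]
    · exact single_le_sum (f := fun i ↦ n / p ^ i) (fun _ _ ↦ Nat.zero_le _)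
        (by simp [Nat.log_pos hp.one_lt hpn])
  simpa using hle

theorem sum_primesLE_div_mul_log_le_log_factorial (n : ℕ) :
    ∑ p ∈ n.primesLE, ((n / p : ℕ) : ℝ) * log p ≤ log n ! := by
  have hsub : n.primesLE ⊆ (n !).primeFactors := fun p hp ↦ by
    have hp' := Nat.prime_of_mem_primesLE hp
    exact Nat.mem_primeFactors.2
      ⟨hp', hp'.dvd_factorial.2 (Nat.le_of_mem_primesLE hp), n.factorial_ne_zero⟩
  rw [log_nat_eq_sum_factorization, Finsupp.sum, Nat.support_factorization]
  refine sum_le_sum_of_subset_of_nonneg hsub (fun p _ _ ↦ ?_) |>.trans' <| sum_le_sum fun p hp ↦ ?_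
  · exact mul_nonneg (Nat.cast_nonneg _) (log_natCast_nonneg p)
  · gcongr
    exact Nat.div_le_factorization_factorial (Nat.prime_of_mem_primesLE hp) n

/-- Mertens' first theorem (upper bound). -/
theorem sum_primesLE_log_div_le (n : ℕ) :
    ∑ p ∈ n.primesLE, log p / p ≤ log n + log 4 := by
  rcases Nat.eq_zero_or_pos n with rfl | hn
  · simp [Nat.primesLE_zero, log_nonneg]
  have hn' : (0 : ℝ) < n := by exact_mod_cast hn
  -- `n / p ≤ ⌊n / p⌋ + 1`, and the two resulting sums are `log n! ≤ n log n` and `θ(n) ≤ n log 4`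
  have key : ∀ p ∈ n.primesLE, n * (log p / p) ≤ ((n / p : ℕ) : ℝ) * log p + log p := by
    intro p hp
    have hp0 : (0 : ℝ) < p := by exact_mod_cast (Nat.prime_of_mem_primesLE hp).pos
    have hdiv : (n : ℝ) / p ≤ ((n / p : ℕ) : ℝ) + 1 := by
      rw [div_le_iff₀ hp0, mul_comm]
      exact_mod_cast (Nat.lt_mul_div_succ n (Nat.prime_of_mem_primesLE hp).pos).le
    calc n * (log p / p) = (n / p : ℝ) * log p := by ring
      _ ≤ (((n / p : ℕ) : ℝ) + 1) * log p := by gcongr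
      _ = _ := by ring
  have hfact : log n ! ≤ n * log n := by
    rw [← log_pow]
    exact log_le_log (by positivity) (by exact_mod_cast Nat.factorial_le_pow n)
  have htheta : ∑ p ∈ n.primesLE, log p ≤ n * log 4 := by
    rw [← Chebyshev.theta_eq_sum_primesLE_log, mul_comm]
    exact Chebyshev.theta_le_log4_mul_x hn'.le
  have : n * ∑ p ∈ n.primesLE, log p / p ≤ n * (log n + log 4) := by
    rw [mul_sum]
    calc ∑ p ∈ n.primesLE, n * (log p / p)
        ≤ ∑ p ∈ n.primesLE, (((n / p : ℕ) : ℝ) * log p + log p) := sum_le_sum key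
      _ ≤ n * (log n + log 4) := by
        rw [sum_add_distrib]
        linarith [sum_primesLE_div_mul_log_le_log_factorial n]
  exact le_of_mul_le_mul_left this hn'

theorem sum_primesLE_mul_eq (g f : ℕ → ℝ) (n : ℕ) :
    ∑ p ∈ n.primesLE, g p * f p = (∑ p ∈ n.primesLE, g p) * f n
      + ∑ i ∈ range n, (∑ p ∈ i.primesLE, g p) * (f i - f (i + 1)) := by
  induction n with
  | zero => simp [Nat.primesLE_zero]
  | succ n ih =>
    rw [Nat.primesLE_succ, sum_range_succ]
    split_ifs
    · rw [sum_insert (Nat.notMem_primesLE n), sum_insert (Nat.notMem_primesLE n), ih]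
      ring
    · rw [ih]
      ring

theorem one_sub_div_le_log_sub_log {u v : ℝ} (hu : 0 < u) (hv : 0 < v) :
    1 - u / v ≤ log v - log u := by
  rw [← log_div hv.ne' hu.ne', ← inv_div]
  exact one_sub_inv_le_log_of_pos (div_pos hv hu)

/-- Mertens' second theorem (upper bound). -/
theorem sum_primesLE_inv_le {n : ℕ} (hn : 2 ≤ n) :
    ∑ p ∈ n.primesLE, (p : ℝ)⁻¹ ≤ log (log n) + 3 - log (log 2) := by
  set S : ℕ → ℝ := fun i ↦ ∑ p ∈ i.primesLE, log p / p
  -- the bound `S i ≤ log i + log 4` makes the `i`-th term of the Abel sum at most `f (i+1) - f i`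
  set f : ℕ → ℝ := fun i ↦ log (log i) - log 4 / log i
  have hS_small : ∀ i < 2, S i = 0 := by
    intro i hi
    interval_cases i <;> simp [S, Nat.primesLE_zero, Nat.primesLE_one]
  have hterm : ∀ i ∈ Ico 2 n, S i * ((log i)⁻¹ - (log (i + 1 : ℕ))⁻¹) ≤ f (i + 1) - f i := by
    intro i hi
    have hi2 : (2 : ℝ) ≤ i := by exact_mod_cast (mem_Ico.1 hi).1
    have hu : 0 < log i := log_pos (by linarith)
    have huv : log i ≤ log (i + 1 : ℕ) := log_le_log (by linarith) (by push_cast; linarith)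
    have hv : 0 < log (i + 1 : ℕ) := hu.trans_le huv
    calc S i * ((log i)⁻¹ - (log (i + 1 : ℕ))⁻¹)
        ≤ (log i + log 4) * ((log i)⁻¹ - (log (i + 1 : ℕ))⁻¹) := by
          gcongr
          · exact sub_nonneg.2 (inv_anti₀ hu huv)
          · exact sum_primesLE_log_div_le i
      _ = (1 - log i / log (i + 1 : ℕ)) + (log 4 / log i - log 4 / log (i + 1 : ℕ)) := by
          field_simp
      _ ≤ f (i + 1) - f i := by
          have := one_sub_div_le_log_sub_log hu hv
          simp only [f]
          linarith
  have habel : ∑ p ∈ n.primesLE, (p : ℝ)⁻¹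
      = S n * (log n)⁻¹ + ∑ i ∈ range n, S i * ((log i)⁻¹ - (log (i + 1 : ℕ))⁻¹) := by
    convert sum_primesLE_mul_eq (fun p ↦ log p / p) (fun i ↦ (log i)⁻¹) n using 1
    refine sum_congr rfl fun p hp ↦ ?_
    have : (1 : ℝ) < p := by exact_mod_cast (Nat.prime_of_mem_primesLE hp).one_lt
    field_simp [(log_pos this).ne']
  have hsmall : ∑ i ∈ range 2, S i * ((log i)⁻¹ - (log (i + 1 : ℕ))⁻¹) = 0 :=
    sum_eq_zero fun i hi ↦ by rw [hS_small i (mem_range.1 hi), zero_mul]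
  rw [← sum_range_add_sum_Ico _ hn, hsmall, zero_add] at habel
  have htel : ∑ i ∈ Ico 2 n, S i * ((log i)⁻¹ - (log (i + 1 : ℕ))⁻¹) ≤ f n - f 2 :=
    (sum_le_sum hterm).trans (sum_Ico_sub f hn).le
  have hlogn : 0 < log n := log_pos (by exact_mod_cast hn)
  have hSn : S n * (log n)⁻¹ ≤ 1 + log 4 / log n := by
    rw [← div_eq_mul_inv, div_le_iff₀ hlogn, add_mul, div_mul_cancel₀ _ hlogn.ne', one_mul]
    exact sum_primesLE_log_div_le n
  have hf2 : f 2 = log (log 2) - 2 := by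
    simp only [f, Nat.cast_ofNat]
    rw [show (4 : ℝ) = 2 ^ 2 by norm_num, log_pow, Nat.cast_ofNat]
    field_simp [(log_pos one_lt_two).ne']
  rw [hf2] at htel
  linarith

theorem sum_primesLE_floor_inv_le {y : ℝ} (hy : 2 ≤ y) :
    ∑ p ∈ ⌊y⌋₊.primesLE, (p : ℝ)⁻¹ ≤ log (log y) + 3 - log (log 2) := by
  have hfloor : 2 ≤ ⌊y⌋₊ := Nat.le_floor (by exact_mod_cast hy)
  have hfloor' : (2 : ℝ) ≤ ⌊y⌋₊ := by exact_mod_cast hfloor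
  have : log (log ⌊y⌋₊) ≤ log (log y) :=
    log_le_log (log_pos (by linarith)) <|
      log_le_log (by linarith) (Nat.floor_le (by linarith))
  linarith [sum_primesLE_inv_le hfloor]

theorem card_filter_primeFactors_mul_log_le (n : ℕ) {y : ℝ} (hy : 0 < y) :
    #{p ∈ n.primeFactors | y < ((p : ℕ) : ℝ)} * log y ≤ log n := by
  rcases eq_or_ne n 0 with rfl | hn
  · simp
  set s := {p ∈ n.primeFactors | y < ((p : ℕ) : ℝ)}
  have hdvd : ∏ p ∈ s, p ∣ n :=
    (prod_dvd_prod_of_subset _ _ _ (filter_subset _ _)).trans n.prod_primeFactors_dvd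
  have hprod : y ^ #s ≤ ∏ p ∈ s, (p : ℝ) := by
    rw [← prod_const]
    exact prod_le_prod (fun _ _ ↦ hy.le) fun p hp ↦ (mem_filter.1 hp).2.le
  rw [← log_pow]
  refine log_le_log (by positivity) (hprod.trans ?_)
  rw [← Nat.cast_prod]
  exact_mod_cast Nat.le_of_dvd (Nat.pos_of_ne_zero hn) hdvd

theorem sum_filter_primeFactors_inv_le (n : ℕ) {y : ℝ} (hy : 1 < y) :
    ∑ p ∈ n.primeFactors with y < ((p : ℕ) : ℝ), (p : ℝ)⁻¹ ≤ log n / (y * log y) := by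
  have hy0 : 0 < y := zero_lt_one.trans hy
  calc ∑ p ∈ n.primeFactors with y < ((p : ℕ) : ℝ), (p : ℝ)⁻¹
      ≤ ∑ p ∈ n.primeFactors with y < ((p : ℕ) : ℝ), y⁻¹ :=
        sum_le_sum fun p hp ↦ inv_anti₀ hy0 (mem_filter.1 hp).2.le
    _ = #{p ∈ n.primeFactors | y < ((p : ℕ) : ℝ)} * log y / (y * log y) := by
        rw [sum_const, nsmul_eq_mul]
        field_simp [(log_pos hy).ne']
    _ ≤ log n / (y * log y) := by
        gcongr
        · exact mul_nonneg hy0.le (log_pos hy).le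
        · exact card_filter_primeFactors_mul_log_le n hy0

theorem sum_primeFactors_inv_le (n : ℕ) {y : ℝ} (hy : 2 ≤ y) :
    ∑ p ∈ n.primeFactors, (p : ℝ)⁻¹ ≤ log (log y) + 3 - log (log 2) + log n / (y * log y) := by
  rw [← sum_filter_not_add_sum_filter _ (fun p : ℕ ↦ y < p)]
  gcongr
  · refine sum_le_sum_of_subset_of_nonneg (fun p hp ↦ ?_) (fun _ _ _ ↦ by positivity)
      |>.trans (sum_primesLE_floor_inv_le hy)
    obtain ⟨hpn, hpy⟩ := mem_filter.1 hp
    exact Nat.mem_primesLE.2 ⟨Nat.le_floor (not_lt.1 hpy), Nat.prime_of_mem_primeFactors hpn⟩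
  · exact sum_filter_primeFactors_inv_le n (by linarith)

theorem sigma_max_order :
    ∃ C : ℝ, 0 < C ∧ ∃ N : ℕ, ∀ n : ℕ, N ≤ n →
      ((∑ d ∈ n.divisors, d : ℕ) : ℝ) ≤ C * n * Real.log (Real.log n) := by
  refine ⟨exp (6 - log (log 2)), exp_pos _, ⌈exp (exp 1)⌉₊, fun n hn ↦ ?_⟩
  have hn' : exp (exp 1) ≤ n := Nat.ceil_le.1 hn
  set L := log n
  have hL : exp 1 ≤ L := (le_log_iff_exp_le (hn'.trans_lt' (exp_pos _))).2 hn'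
  have hlogL : 1 ≤ log L := (le_log_iff_exp_le (hL.trans_lt' (exp_pos _))).2 hL
  have hL2 : 2 ≤ L := by linarith [add_one_le_exp 1]
  have hinv : ∑ p ∈ n.primeFactors, (p : ℝ)⁻¹ ≤ log (log L) + 4 - log (log 2) := by
    have hlarge : L / (L * log L) ≤ 1 := by
      rw [div_mul_cancel_left₀ (by linarith)]
      exact inv_le_one_of_one_le₀ hlogL
    linarith [sum_primeFactors_inv_le n hL2]
  calc ((∑ d ∈ n.divisors, d : ℕ) : ℝ)
      ≤ n * ∏ p ∈ n.primeFactors, (p / (p - 1) : ℝ) := sum_divisors_le_mul_prod_primeFactors n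
    _ ≤ n * exp (∑ p ∈ n.primeFactors, ((p : ℝ) - 1)⁻¹) := by
        gcongr; exact prod_primeFactors_div_sub_one_le_exp n
    _ ≤ n * exp ((6 - log (log 2)) + log (log L)) := by
        gcongr; linarith [sum_primeFactors_inv_sub_one_le n]
    _ = exp (6 - log (log 2)) * n * log L := by
        rw [exp_add, exp_log (by linarith)]; ring
end

section
/- There exists a constant C > 0 such that for all sufficiently large n, ω(n) ≤ C · log n / log log n. -/
set_option maxRecDepth 8000

theorem omega_max_order :
    ∃ C : ℝ, 0 < C ∧ ∃ N : ℕ, ∀ n : ℕ, N ≤ n →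
      (n.primeFactors.card : ℝ) ≤ C * Real.log n / Real.log (Real.log n) := by
  classical
  refine ⟨5, by norm_num, 3 ^ 256, fun n hn => ?_⟩
  have hn0 : 0 < n := lt_of_lt_of_le (by positivity) hn
  set x := Real.log n with hxdef
  have hlog3 : (1:ℝ) ≤ Real.log 3 := by
    rw [Real.le_log_iff_exp_le (by norm_num)]
    exact Real.exp_one_lt_d9.le.trans (by norm_num)
  have hx256 : (256:ℝ) ≤ x := by
    have h1 : ((3:ℝ) ^ 256 : ℝ) ≤ (n : ℝ) := by
      calc ((3:ℝ) ^ 256) = ((3 ^ 256 : ℕ) : ℝ) := by push_cast; ring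
        _ ≤ (n : ℝ) := by exact_mod_cast hn
    calc (256:ℝ) = 256 * 1 := by ring
      _ ≤ 256 * Real.log 3 := by linarith
      _ = Real.log ((3:ℝ) ^ 256) := by rw [Real.log_pow]; push_cast; ring
      _ ≤ x := Real.log_le_log (by positivity) h1
  have hx0 : (0:ℝ) < x := by linarith
  set s := Real.sqrt x with hsdef
  have hs0 : 0 < s := Real.sqrt_pos.mpr hx0
  have hssq : s * s = x := Real.mul_self_sqrt hx0.le
  have hs16 : (16:ℝ) ≤ s := (Real.le_sqrt (by norm_num) hx0.le).mpr (by nlinarith)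
  set q := Real.sqrt s with hqdef
  have hq0 : 0 < q := Real.sqrt_pos.mpr hs0
  have hqsq : q * q = s := Real.mul_self_sqrt hs0.le
  have hq4 : (4:ℝ) ≤ q := (Real.le_sqrt (by norm_num) hs0.le).mpr (by nlinarith)
  have hlogq : Real.log q ≤ q - 1 := Real.log_le_sub_one_of_pos hq0
  set LL := Real.log x with hLLdef
  have hLL_eq : LL = 4 * Real.log q := by
    have h1 : Real.log s = Real.log x / 2 := by rw [hsdef, Real.log_sqrt hx0.le]
    have h2 : Real.log q = Real.log s / 2 := by rw [hqdef, Real.log_sqrt hs0.le]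
    rw [hLLdef, h2, h1]; ring
  have hlogq1 : (1:ℝ) ≤ Real.log q := by
    rw [Real.le_log_iff_exp_le hq0]
    exact Real.exp_one_lt_d9.le.trans (by linarith)
  have hLL4 : (4:ℝ) ≤ LL := by rw [hLL_eq]; linarith
  have hLL_le_s : LL ≤ s := by
    rw [hLL_eq]
    nlinarith
  -- threshold
  set T := ⌊s⌋₊ with hTdef
  have hTle : (T:ℝ) ≤ s := Nat.floor_le hs0.le
  have hTge : s - 1 ≤ (T:ℝ) := by
    have := Nat.lt_floor_add_one s
    linarith
  have hT8 : (8:ℝ) ≤ (T:ℝ) := by linarith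
  have hT2 : 2 ≤ T := by exact_mod_cast (by linarith : (2:ℝ) ≤ (T:ℝ))
  have hlog2 : Real.log 2 ≤ 1 := by linarith [Real.log_le_sub_one_of_pos (by norm_num : (0:ℝ) < 2)]
  have hlogT : LL / 4 ≤ Real.log T := by
    have h1 : Real.log (s / 2) ≤ Real.log T := Real.log_le_log (by linarith) (by linarith)
    have h2 : Real.log (s / 2) = Real.log s - Real.log 2 := Real.log_div hs0.ne' (by norm_num)
    have h3 : Real.log s = LL / 2 := by rw [hsdef, Real.log_sqrt hx0.le, hLLdef]
    linarith
  -- split primeFactors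
  set S := n.primeFactors with hSdef
  set A := S.filter (fun p => p < T) with hAdef
  set B := S.filter (fun p => ¬ p < T) with hBdef
  have hcard : A.card + B.card = S.card := Finset.card_filter_add_card_filter_not _
  have hA : A.card ≤ T := by
    have : A ⊆ Finset.range T := by
      intro p hp
      rw [hAdef, Finset.mem_filter] at hp
      exact Finset.mem_range.mpr hp.2
    simpa using Finset.card_le_card this
  have hBn : T ^ B.card ≤ n := by
    calc T ^ B.card ≤ ∏ p ∈ B, p := by
          apply Finset.pow_card_le_prod
          intro p hp
          rw [hBdef, Finset.mem_filter] at hp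
          omega
      _ ≤ n := by
          apply Nat.le_of_dvd hn0
          exact dvd_trans (Finset.prod_dvd_prod_of_subset _ _ _ (Finset.filter_subset _ _))
            (Nat.prod_primeFactors_dvd n)
  have hBr : (B.card : ℝ) * Real.log T ≤ x := by
    have h1 : Real.log ((T:ℝ) ^ B.card) ≤ x := by
      rw [hxdef]
      apply Real.log_le_log (by positivity)
      calc ((T:ℝ) ^ B.card) = ((T ^ B.card : ℕ) : ℝ) := by push_cast; ring
        _ ≤ (n:ℝ) := by exact_mod_cast hBn
    rwa [Real.log_pow] at h1
  have hlogT0 : (0:ℝ) < Real.log T := by linarith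
  have hB4 : (B.card : ℝ) ≤ 4 * x / LL := by
    have h1 : (B.card : ℝ) * (LL / 4) ≤ x := by
      calc (B.card : ℝ) * (LL / 4) ≤ (B.card : ℝ) * Real.log T := by
            apply mul_le_mul_of_nonneg_left hlogT (by positivity)
        _ ≤ x := hBr
    rw [le_div_iff₀ (by linarith : (0:ℝ) < LL)]
    linarith
  have hAx : (A.card : ℝ) ≤ x / LL := by
    have h1 : (A.card : ℝ) ≤ (T:ℝ) := by exact_mod_cast hA
    have h2 : s ≤ x / LL := by
      rw [le_div_iff₀ (by linarith : (0:ℝ) < LL)]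
      nlinarith
    linarith
  have hfinal : (S.card : ℝ) ≤ 5 * x / LL := by
    have : (S.card : ℝ) = (A.card : ℝ) + (B.card : ℝ) := by
      rw [← hcard]; push_cast; ring
    rw [this]
    have : 4 * x / LL + x / LL = 5 * x / LL := by field_simp; ring
    linarith
  exact hfinal
end
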